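/- arXiv:1107.4568 — 4 statements merged into one kernel-verified Lean document; each statement's English description precedes it below -/
import Mathlib

section
/- Let m ≥ n ≥ 2 be integers and let (d₂⁺, d₂⁻, …, dₙ⁺, dₙ⁻) be a 2(n−1)-tuple of non-negative integers satisfying m = Σ_{j=2}^{n} (j−1)(dⱼ⁺ + dⱼ⁻) + 1 and m ≥ Σ_{j=2}^{n} j·dⱼ⁺ and m ≥ Σ_{j=2}^{n} j·dⱼ⁻. Then there exist permutations τ⁺, τ⁻, σ of {1, …, m} such that τ⁺ has cycle type consisting of exactly dⱼ⁺ cycles of length j for each 2 ≤ j ≤ n (and fixed points otherwise), τ⁻ has cycle type consisting of exactly dⱼ⁻ cycles of length j for each 2 ≤ j ≤ n, σ is a cycle of order m, and σ ∘ τ⁺ ∘ τ⁻ = 1. -/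
/-!
Take σ⁻¹ to be the rotation `finRotate m` and factor it as τ⁺ * τ⁻ by induction on `m`.
The rotation of `[0, m)` is the `j`-cycle `(0 1 … j-1)` times the rotation of `[j - 1, m)`. So if
τ⁺ is to contain a `j`-cycle and the remaining data fit into `m - j + 1` points, factor the
rotation of `[j - 1, m)` inductively, conjugate by a rotation so that its τ⁺-part fixes `j - 1`,
and multiply that τ⁺-part by the `j`-cycle. Since `m - 1` is the total of the `l - 1` over all
cycle lengths `l`, such a `j` exists for τ⁺ or for τ⁻; the two roles are exchanged by
`P * M = ρ ↔ (P * M * P⁻¹) * P = ρ`.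
-/

open Equiv Equiv.Perm Fin

lemma castAdd_notMem_range_natAddEmb {k m : ℕ} (i : Fin k) :
    castAdd m i ∉ Set.range (natAddEmb k (m := m)) := by
  rintro ⟨y, hy⟩
  have := congrArg Fin.val hy
  simp only [natAddEmb_apply, val_natAdd, val_castAdd] at this
  omega

lemma finRotate_extendDomain_natAddEmb (k m : ℕ) :
    (finRotate (m + 1)).extendDomain (natAddEmb k).toEquivRange =
      cycleIcc (natAdd k 0 : Fin (k + (m + 1))) ⟨k + m, by omega⟩ := by
  refine Equiv.ext fun x => ?_
  induction x using Fin.addCases with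
  | left i =>
    rw [extendDomain_apply_not_subtype _ _ (castAdd_notMem_range_natAddEmb i),
      cycleIcc_of_lt (by simp [Fin.lt_def])]
  | right y =>
    rw [show natAdd k y = (natAddEmb k).toEquivRange y from rfl, extendDomain_apply_image,
      Function.Embedding.toEquivRange_apply,
      cycleIcc_of_le_of_le (by simp [Fin.le_def]) (by simp [Fin.le_def]; omega)]
    split_ifs <;> simp_all [Fin.ext_iff, Fin.val_add_one]; omega

lemma finRotate_eq_cycleRange_mul_extendDomain (k m : ℕ) :
    finRotate (k + (m + 1)) = cycleRange (natAdd k 0 : Fin (k + (m + 1))) *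
      (finRotate (m + 1)).extendDomain (natAddEmb k).toEquivRange := by
  apply DFunLike.coe_injective
  rw [finRotate_extendDomain_natAddEmb, Perm.coe_mul, ← cycleIcc_zero_eq_cycleRange,
    cycleIcc.trans (Fin.zero_le _) (by simp [Fin.le_def]), cycleIcc_zero_eq_cycleRange]
  exact (congrArg DFunLike.coe (cycleRange_last (k + m))).symm

lemma commute_addRight_finRotate {m : ℕ} (c : Fin (m + 1)) :
    Commute (Equiv.addRight c) (finRotate (m + 1)) :=
  Equiv.ext fun x => by simp only [Perm.mul_apply, coe_addRight, finRotate_apply]; abel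

lemma Multiset.add_two_mul_card_le_sum_add_two {μ : Multiset ℕ} (hμ : ∀ l ∈ μ, 2 ≤ l) {j : ℕ}
    (hj : j ∈ μ) : j + 2 * card μ ≤ μ.sum + 2 := by
  have hrest := card_nsmul_le_sum (s := μ.erase j) fun l hl => hμ l (mem_of_mem_erase hl)
  rw [← cons_erase hj, sum_cons, card_cons]
  rw [smul_eq_mul] at hrest
  omega

lemma exists_mem_sum_add_le_succ_or {m : ℕ} {μ ν : Multiset ℕ} (hμ2 : ∀ l ∈ μ, 2 ≤ l)
    (hν2 : ∀ l ∈ ν, 2 ≤ l) (hgenus : μ.sum + ν.sum + 1 = m + μ.card + ν.card)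
    (hμ : μ.sum ≤ m) (hν : ν.sum ≤ m) (hne : μ ≠ 0 ∨ ν ≠ 0) :
    (∃ j ∈ μ, ν.sum + j ≤ m + 1) ∨ ∃ j ∈ ν, μ.sum + j ≤ m + 1 := by
  rcases Multiset.empty_or_exists_mem μ with rfl | ⟨i, hi⟩
  · obtain ⟨j, hj⟩ := Multiset.exists_mem_of_ne_zero (hne.resolve_left (by simp))
    exact Or.inr ⟨j, hj, by simpa using (Multiset.le_sum_of_mem hj).trans hν |>.trans m.le_succ⟩
  rcases Multiset.empty_or_exists_mem ν with rfl | ⟨j, hj⟩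
  · exact Or.inl ⟨i, hi, by simpa using (Multiset.le_sum_of_mem hi).trans hμ |>.trans m.le_succ⟩
  -- Adding the two failing inequalities contradicts the lower bounds on μ.sum and ν.sum.
  have hi2 := Multiset.add_two_mul_card_le_sum_add_two hμ2 hi
  have hj2 := Multiset.add_two_mul_card_le_sum_add_two hν2 hj
  by_cases hle : ν.sum + i ≤ m + 1
  · exact Or.inl ⟨i, hi, hle⟩
  · exact Or.inr ⟨j, hj, by omega⟩

def HasRotationFactorization (m : ℕ) (μ ν : Multiset ℕ) : Prop :=
  ∃ P M : Perm (Fin m), P.cycleType = μ ∧ M.cycleType = ν ∧ P * M = finRotate m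

namespace HasRotationFactorization

variable {m : ℕ} {μ ν : Multiset ℕ}

lemma symm (h : HasRotationFactorization m μ ν) : HasRotationFactorization m ν μ := by
  obtain ⟨P, M, hP, hM, hPM⟩ := h
  exact ⟨P * M * P⁻¹, P, by rw [cycleType_conj, hM], hP, by rw [inv_mul_cancel_right, hPM]⟩

lemma exists_apply_zero_eq_zero (h : HasRotationFactorization (m + 1) μ ν) (hμ : μ.sum ≤ m) :
    ∃ P M : Perm (Fin (m + 1)), P.cycleType = μ ∧ M.cycleType = ν ∧
      P * M = finRotate (m + 1) ∧ P 0 = 0 := by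
  obtain ⟨P, M, hP, hM, hPM⟩ := h
  obtain ⟨s, -, hs⟩ := Finset.exists_mem_notMem_of_card_lt_card (s := P.support)
    (t := Finset.univ) (by rw [← sum_cycleType, hP, Finset.card_univ, Fintype.card_fin]; omega)
  let r : Perm (Fin (m + 1)) := Equiv.addRight (-s)
  refine ⟨r * P * r⁻¹, r * M * r⁻¹, by rw [cycleType_conj, hP], by rw [cycleType_conj, hM], ?_, ?_⟩
  · rw [show r * P * r⁻¹ * (r * M * r⁻¹) = r * (P * M) * r⁻¹ by group, hPM,
      (commute_addRight_finRotate _).eq, mul_inv_cancel_right]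
  · simp [r, Perm.notMem_support.1 hs]

lemma cons (h : HasRotationFactorization (m + 1) μ ν) (hμ : μ.sum ≤ m) (k : ℕ) :
    HasRotationFactorization (k + 1 + (m + 1)) ((k + 2) ::ₘ μ) ν := by
  obtain ⟨P, M, hP, hM, hPM, hP0⟩ := h.exists_apply_zero_eq_zero hμ
  let e := (natAddEmb (k + 1) (m := m + 1)).toEquivRange
  let C := cycleRange (natAdd (k + 1) 0 : Fin (k + 1 + (m + 1)))
  have hdisj : Disjoint C (P.extendDomain e) := by
    intro x
    induction x using Fin.addCases with
    | left i =>
      exact Or.inr (extendDomain_apply_not_subtype _ _ (castAdd_notMem_range_natAddEmb i))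
    | right y =>
      rcases eq_or_ne y 0 with rfl | hy
      · right
        rw [show natAdd (k + 1) 0 = e 0 from rfl, extendDomain_apply_image, hP0]
      · refine Or.inl (cycleRange_of_gt (Fin.lt_def.2 ?_))
        simpa [Nat.pos_iff_ne_zero, Fin.val_ne_zero_iff] using hy
  refine ⟨C * P.extendDomain e, M.extendDomain e, ?_, ?_, ?_⟩
  · rw [hdisj.cycleType_mul, cycleType_cycleRange (by simp [Fin.ext_iff]), cycleType_extendDomain,
      hP]
    rfl
  · rw [cycleType_extendDomain, hM]
  · rw [mul_assoc, extendDomain_mul, hPM]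
    exact (finRotate_eq_cycleRange_mul_extendDomain _ _).symm

theorem of_sum_le (hμ2 : ∀ l ∈ μ, 2 ≤ l) (hν2 : ∀ l ∈ ν, 2 ≤ l)
    (hgenus : μ.sum + ν.sum + 1 = m + μ.card + ν.card) (hμ : μ.sum ≤ m) (hν : ν.sum ≤ m) :
    HasRotationFactorization m μ ν := by
  induction m using Nat.strong_induction_on generalizing μ ν with
  | _ m ih =>
  by_cases h0 : μ = 0 ∧ ν = 0
  · obtain ⟨rfl, rfl⟩ := h0
    obtain rfl : m = 1 := by simpa using hgenus.symm
    exact ⟨1, 1, by simp, by simp, Subsingleton.elim _ _⟩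
  have hne : μ ≠ 0 ∨ ν ≠ 0 := by tauto
  wlog hpeel : ∃ j ∈ μ, ν.sum + j ≤ m + 1 generalizing μ ν
  · exact (this hν2 hμ2 (by omega) hν hμ (by tauto) hne.symm
      ((exists_mem_sum_add_le_succ_or hμ2 hν2 hgenus hμ hν hne).resolve_left hpeel)).symm
  obtain ⟨j, hj, hjle⟩ := hpeel
  obtain ⟨k, rfl⟩ : ∃ k, j = k + 2 := ⟨j - 2, by have := hμ2 j hj; omega⟩
  have hjμ := Multiset.sum_erase hj
  have hcard := Multiset.card_erase_add_one hj
  obtain ⟨m', rfl⟩ : ∃ m', m = k + 1 + (m' + 1) := ⟨m - k - 2, by omega⟩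
  have h := ih (m' + 1) (by omega) (μ := μ.erase (k + 2))
    (fun l hl => hμ2 l (Multiset.mem_of_mem_erase hl)) hν2 (by omega) (by omega) (by omega)
  simpa only [Multiset.cons_erase hj] using h.cons (by omega) k

end HasRotationFactorization

lemma Multiset.sum_sum_replicate (s : Finset ℕ) (d : ℕ → ℕ) :
    (∑ j ∈ s, replicate (d j) j).sum = ∑ j ∈ s, j * d j := by
  simp [sum_sum, mul_comm]

lemma Multiset.card_sum_replicate (s : Finset ℕ) (d : ℕ → ℕ) :
    card (∑ j ∈ s, replicate (d j) j) = ∑ j ∈ s, d j := by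
  simp [card_sum]

lemma Multiset.mem_of_mem_sum_replicate {s : Finset ℕ} {d : ℕ → ℕ} {l : ℕ}
    (hl : l ∈ ∑ j ∈ s, replicate (d j) j) : l ∈ s := by
  obtain ⟨j, hj, hl⟩ := mem_sum.1 hl
  rwa [eq_of_mem_replicate hl]

theorem stmt0 (m n : ℕ) (dp dm : ℕ → ℕ) (hn : 2 ≤ n) (hnm : n ≤ m)
    (h1 : m = (∑ j ∈ Finset.Icc 2 n, (j - 1) * (dp j + dm j)) + 1)
    (h2 : ∑ j ∈ Finset.Icc 2 n, j * dp j ≤ m)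
    (h3 : ∑ j ∈ Finset.Icc 2 n, j * dm j ≤ m) :
    ∃ τp τm σ : Equiv.Perm (Fin m),
      τp.cycleType = ∑ j ∈ Finset.Icc 2 n, Multiset.replicate (dp j) j ∧
      τm.cycleType = ∑ j ∈ Finset.Icc 2 n, Multiset.replicate (dm j) j ∧
      σ.IsCycle ∧ σ.support = Finset.univ ∧
      σ * τp * τm = 1 := by
  have two_le (d : ℕ → ℕ) (l) (hl : l ∈ ∑ j ∈ Finset.Icc 2 n, Multiset.replicate (d j) j) :
      2 ≤ l := (Finset.mem_Icc.1 (Multiset.mem_of_mem_sum_replicate hl)).1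
  have hterm : ∀ j ∈ Finset.Icc 2 n,
      j * dp j + j * dm j = (j - 1) * (dp j + dm j) + (dp j + dm j) := by
    intro j hj
    obtain ⟨i, rfl⟩ : ∃ i, j = i + 1 := ⟨j - 1, by have := (Finset.mem_Icc.1 hj).1; omega⟩
    simp only [add_tsub_cancel_right]
    ring
  have hgenus := Finset.sum_congr rfl hterm
  simp only [Finset.sum_add_distrib] at hgenus
  obtain ⟨P, M, hP, hM, hPM⟩ := HasRotationFactorization.of_sum_le (m := m) (two_le dp) (two_le dm)
    (by simp only [Multiset.sum_sum_replicate, Multiset.card_sum_replicate]; omega)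
    (by rwa [Multiset.sum_sum_replicate]) (by rwa [Multiset.sum_sum_replicate])
  refine ⟨P, M, (finRotate m)⁻¹, hP, hM, (isCycle_finRotate_of_le (by omega)).inv, ?_, ?_⟩
  · rw [support_inv, support_finRotate_of_le (by omega)]
  · rw [mul_assoc, hPM, inv_mul_cancel]
end

section
/- Let 2 ≤ i ≤ m be integers and let τ be a permutation of {1, …, m} such that every cycle of τ (including fixed points, regarded as cycles of length 1) contains exactly one element of {1, …, i}. Then the composition τ ∘ (1 2 ⋯ i), where (1 2 ⋯ i) denotes the i-cycle sending 1↦2, 2↦3, …, i↦1, is a single m-cycle on {1, …, m}. -/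
/-!
Write `f = τ * σ` with `σ` the `i`-cycle on `{0, …, i-1}`. Starting at any `x`, the `τ`-orbit of
`x` reaches its unique representative `y < i` without passing through another point below `i`,
and on that stretch `σ` acts trivially, so `f` follows `τ` from `x` to `y`. Hence every point
lies in the `f`-cycle of a representative. The representatives lie in a single `f`-cycle: `f`
sends `s` to `τ (s + 1)`, which lies in the `τ`-cycle, hence in the `f`-cycle, of `s + 1`.
So `f` has a single orbit, which contains the two points `0 ≠ 1`.
-/

namespace Equiv.Perm

variable {α : Type*}

theorem mul_pow_apply_of_forall_lt {τ σ : Perm α} {x : α} {k : ℕ}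
    (hσ : ∀ j < k, σ ((τ ^ j) x) = (τ ^ j) x) : ((τ * σ) ^ k) x = (τ ^ k) x := by
  induction k with
  | zero => rfl
  | succ k ih =>
    rw [pow_succ', mul_apply, ih fun j hj => hσ j (by omega), pow_succ', mul_apply, mul_apply,
      hσ k k.lt_succ_self]

theorem SameCycle.mul_of_unique [Finite α] {τ σ : Perm α} {S : Set α} (hσ : ∀ z ∉ S, σ z = z)
    {x y : α} (hxy : τ.SameCycle x y) (huniq : ∀ z ∈ S, τ.SameCycle x z → z = y) :
    (τ * σ).SameCycle x y := by
  classical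
  have hex : ∃ k : ℕ, (τ ^ k) x = y := hxy.exists_nat_pow_eq
  -- Before the first visit of `y`, the `τ`-orbit of `x` avoids `S`, where `σ` is the identity.
  have hfixed : ∀ j < Nat.find hex, σ ((τ ^ j) x) = (τ ^ j) x := by
    refine fun j hj => hσ _ fun hjS => Nat.find_min hex hj ?_
    exact huniq _ hjS (sameCycle_pow_right.2 .rfl)
  exact ⟨Nat.find hex, by rw [zpow_natCast, mul_pow_apply_of_forall_lt hfixed, Nat.find_spec hex]⟩

theorem isCycle_and_support_eq_univ_of_sameCycle [Fintype α] [DecidableEq α] {f : Perm α}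
    {a b : α} (hab : a ≠ b) (hf : ∀ x, f.SameCycle a x) :
    f.IsCycle ∧ f.support = Finset.univ := by
  have hmoves : ∀ x, f x ≠ x := fun x hx => by
    have hxa : x = a := ((hf x).symm.trans (hf a)).eq_of_left hx
    have hxb : x = b := ((hf x).symm.trans (hf b)).eq_of_left hx
    exact hab (hxa.symm.trans hxb)
  exact ⟨⟨a, hmoves a, fun y _ => hf y⟩, Finset.eq_univ_of_forall fun x => mem_support.2 (hmoves x)⟩

end Equiv.Perm

open Equiv.Perm

theorem stmt1 (m i : ℕ) (hi : 2 ≤ i) (him : i ≤ m) (τ σ : Equiv.Perm (Fin m))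
    (hσ : ∀ x : Fin m, ((σ x : Fin m) : ℕ) =
      if (x : ℕ) + 1 < i then (x : ℕ) + 1
      else if (x : ℕ) = i - 1 then 0 else (x : ℕ))
    (hτ : ∀ x : Fin m, ∃! y : Fin m, (y : ℕ) < i ∧ τ.SameCycle x y) :
    (τ * σ).IsCycle ∧ (τ * σ).support = Finset.univ := by
  have hσ_fix : ∀ z ∉ {y : Fin m | (y : ℕ) < i}, σ z = z := fun z hz =>
    Fin.ext <| by simp only [Set.mem_ofPred_eq] at hz; rw [hσ, if_neg (by omega), if_neg (by omega)]
  have hσ_succ : ∀ n (hn : n + 1 < i), σ ⟨n, by omega⟩ = ⟨n + 1, by omega⟩ := fun n hn =>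
    Fin.ext <| by rw [hσ, if_pos hn]
  have to_rep : ∀ x y : Fin m, (y : ℕ) < i → τ.SameCycle x y → (τ * σ).SameCycle x y :=
    fun x y hy hxy => hxy.mul_of_unique hσ_fix fun z hz hxz => by
      obtain ⟨w, -, hw⟩ := hτ x
      exact (hw z ⟨hz, hxz⟩).trans (hw y ⟨hy, hxy⟩).symm
  have reps : ∀ s (hs : s < i), (τ * σ).SameCycle ⟨0, by omega⟩ ⟨s, by omega⟩ := by
    intro s hs
    induction s with
    | zero => rfl
    | succ n ih =>
      refine (ih (by omega)).trans (sameCycle_apply_right.1 ?_).symm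
      rw [mul_apply, hσ_succ n hs]
      exact (to_rep _ ⟨n + 1, by omega⟩ hs (sameCycle_apply_left.2 .rfl)).symm
  refine isCycle_and_support_eq_univ_of_sameCycle (a := ⟨0, by omega⟩) (b := ⟨1, by omega⟩)
    (by simp [Fin.ext_iff]) fun x => ?_
  obtain ⟨w, ⟨hw, hxw⟩, -⟩ := hτ x
  exact (reps w hw).trans (to_rep x w hw hxw).symm
end

section
/- Let m ≥ n ≥ 2 and let (d₂⁺, d₂⁻, …, dₙ⁺, dₙ⁻) be non-negative integers with m = Σ_{j=2}^{n}(j−1)(dⱼ⁺+dⱼ⁻) + 1, m ≥ Σ_{j=2}^{n} j dⱼ⁺, and m ≥ Σ_{j=2}^{n} j dⱼ⁻. Assume Σ_{j=2}^{n} dⱼ⁺ ≥ 2, Σ_{j=2}^{n} dⱼ⁻ ≥ 2, and Σ_{j=2}^{n} j dⱼ⁻ ≥ Σ_{j=2}^{n} j dⱼ⁺. Let i = min{ j : dⱼ⁻ > 0 }. Then, setting m' = m − i + 1, one has m' ≥ 2, Σ_{j=2}^{n} j dⱼ⁻ − i < m', and Σ_{j=2}^{n} j dⱼ⁺ ≤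 m'. -/
/-!
Write `A = ∑ j dⱼ⁺`, `B = ∑ j dⱼ⁻`, `P = ∑ dⱼ⁺`, `Q = ∑ dⱼ⁻`, so that `m - 1 = (A - P) + (B - Q)`.
Since every index is at least `2` and every `j` with `dⱼ⁻ > 0` is at least `i`, we have
`2P ≤ A` and `iQ ≤ B`. With `A ≤ B`, `Q ≥ 2` and `(i - 2)(Q - 2) ≥ 0` the three inequalities
are linear consequences.
-/

namespace Finset

theorem sum_mul_eq_sum_pred_mul_add_sum {s : Finset ℕ} (d : ℕ → ℕ) (hs : ∀ j ∈ s, 0 < j) :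
    ∑ j ∈ s, j * d j = ∑ j ∈ s, (j - 1) * d j + ∑ j ∈ s, d j := by
  rw [← sum_add_distrib]
  refine sum_congr rfl fun j hj => ?_
  obtain ⟨k, rfl⟩ := Nat.exists_eq_add_of_lt (hs j hj)
  simp only [zero_add, Nat.add_sub_cancel]
  ring

theorem mul_sum_le_sum_mul {s : Finset ℕ} {k : ℕ} (d : ℕ → ℕ)
    (h : ∀ j ∈ s, 0 < d j → k ≤ j) : k * ∑ j ∈ s, d j ≤ ∑ j ∈ s, j * d j := by
  rw [mul_sum]
  refine sum_le_sum fun j hj => ?_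
  rcases (d j).eq_zero_or_pos with hdj | hdj
  · simp [hdj]
  · exact Nat.mul_le_mul_right _ (h j hj hdj)

end Finset

open Finset

theorem sInf_support_mem_Icc {n : ℕ} (d : ℕ → ℕ) (hd : ∑ j ∈ Icc 2 n, d j ≠ 0) :
    sInf {j | 2 ≤ j ∧ j ≤ n ∧ 0 < d j} ∈ {j | 2 ≤ j ∧ j ≤ n ∧ 0 < d j} := by
  obtain ⟨j, hj, hdj⟩ := exists_ne_zero_of_sum_ne_zero hd
  rw [mem_Icc] at hj
  exact Nat.sInf_mem ⟨j, hj.1, hj.2, Nat.pos_of_ne_zero hdj⟩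

theorem stmt3_general (m n : ℕ) (dp dm : ℕ → ℕ)
    (h1 : m = (∑ j ∈ Finset.Icc 2 n, (j - 1) * (dp j + dm j)) + 1)
    (h3 : ∑ j ∈ Finset.Icc 2 n, j * dm j ≤ m)
    (h5 : 2 ≤ ∑ j ∈ Finset.Icc 2 n, dm j)
    (h6 : ∑ j ∈ Finset.Icc 2 n, j * dp j ≤ ∑ j ∈ Finset.Icc 2 n, j * dm j)
    (i : ℕ) (hi : i = sInf {j | 2 ≤ j ∧ j ≤ n ∧ 0 < dm j}) :
    2 ≤ m - i + 1 ∧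
    (∑ j ∈ Finset.Icc 2 n, j * dm j) - i < m - i + 1 ∧
    ∑ j ∈ Finset.Icc 2 n, j * dp j ≤ m - i + 1 := by
  have hpos : ∀ j ∈ Icc 2 n, 0 < j := fun j hj => two_pos.trans_le (mem_Icc.1 hj).1
  obtain ⟨hi2, -, -⟩ : 2 ≤ i ∧ i ≤ n ∧ 0 < dm i := hi ▸ sInf_support_mem_Icc dm (by omega)
  have hA := sum_mul_eq_sum_pred_mul_add_sum dp hpos
  have hB := sum_mul_eq_sum_pred_mul_add_sum dm hpos
  have hm : m = ∑ j ∈ Icc 2 n, (j - 1) * dp j + ∑ j ∈ Icc 2 n, (j - 1) * dm j + 1 := by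
    simp only [h1, mul_add, sum_add_distrib]
  have hP : 2 * ∑ j ∈ Icc 2 n, dp j ≤ ∑ j ∈ Icc 2 n, j * dp j :=
    mul_sum_le_sum_mul dp fun j hj _ => (mem_Icc.1 hj).1
  have hQ : i * ∑ j ∈ Icc 2 n, dm j ≤ ∑ j ∈ Icc 2 n, j * dm j :=
    mul_sum_le_sum_mul dm fun j hj hdj => hi ▸ Nat.sInf_le ⟨(mem_Icc.1 hj).1, (mem_Icc.1 hj).2, hdj⟩
  have hiQ : 2 * ∑ j ∈ Icc 2 n, dm j + 2 * i ≤ i * ∑ j ∈ Icc 2 n, dm j + 4 := by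
    nlinarith [Nat.mul_le_mul (Nat.sub_le_sub_right hi2 2) (Nat.sub_le_sub_right h5 2)]
  omega

theorem stmt3 (m n : ℕ) (dp dm : ℕ → ℕ) (hn : 2 ≤ n) (hnm : n ≤ m)
    (h1 : m = (∑ j ∈ Finset.Icc 2 n, (j - 1) * (dp j + dm j)) + 1)
    (h2 : ∑ j ∈ Finset.Icc 2 n, j * dp j ≤ m)
    (h3 : ∑ j ∈ Finset.Icc 2 n, j * dm j ≤ m)
    (h4 : 2 ≤ ∑ j ∈ Finset.Icc 2 n, dp j)
    (h5 : 2 ≤ ∑ j ∈ Finset.Icc 2 n, dm j)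
    (h6 : ∑ j ∈ Finset.Icc 2 n, j * dp j ≤ ∑ j ∈ Finset.Icc 2 n, j * dm j)
    (i : ℕ) (hi : i = sInf {j | 2 ≤ j ∧ j ≤ n ∧ 0 < dm j}) :
    2 ≤ m - i + 1 ∧
    (∑ j ∈ Finset.Icc 2 n, j * dm j) - i < m - i + 1 ∧
    ∑ j ∈ Finset.Icc 2 n, j * dp j ≤ m - i + 1 :=
  stmt3_general m n dp dm h1 h3 h5 h6 i hi
end

section
/- Let m ≥ 1 and let q ∈ ℂ[z] be a monic polynomial of degree 2m whose coefficient of z^{2m−1} is zero. Then there exist a unique monic polynomial ν ∈ ℂ[z] of degree m whose coefficient of z^{m−1} is zero and a unique polynomial b ∈ ℂ[z] of degree at most m − 1 such that q = ν² − 4b. -/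
/-!
Since the leading coefficient of `ν` is `1`, adding `c X^n` (`n < m`) to `ν` changes the
coefficient of `X^(m+n)` in `ν^2` by `2c` and leaves the higher ones untouched; choosing these
corrections from the top down makes `q - ν^2` vanish in degrees `2m - 1, …, m`, and then
`b = (ν^2 - q) / 4`. The `X^(2m-1)` coefficient of `ν^2` is twice the `X^(m-1)` coefficient of `ν`,
which is therefore `0`. Uniqueness: `ν₁^2 - ν₂^2 = (ν₁ - ν₂)(ν₁ + ν₂)` has degree `< m`, while
`ν₁ + ν₂` has degree exactly `m` (leading coefficient `2`), so `ν₁ = ν₂`.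
-/

open Polynomial

namespace Polynomial

variable {K : Type*} [Field K]

theorem exists_monic_coeff_sub_sq_eq_zero_of_succ (h2 : (2 : K) ≠ 0) {q ν : K[X]} {m n : ℕ}
    (hν : ν.Monic) (hνd : ν.natDegree = m) (hn : n < m)
    (hr : ∀ j, m + n + 1 ≤ j → (q - ν ^ 2).coeff j = 0) :
    ∃ μ : K[X], μ.Monic ∧ μ.natDegree = m ∧ ∀ j, m + n ≤ j → (q - μ ^ 2).coeff j = 0 := by
  set c := (q - ν ^ 2).coeff (m + n) / 2
  have hdeg : (C c * X ^ n).degree < ν.degree := by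
    rw [degree_eq_natDegree hν.ne_zero, hνd]
    exact (degree_C_mul_X_pow_le n c).trans_lt (WithBot.coe_lt_coe.mpr hn)
  refine ⟨ν + C c * X ^ n, hν.add_of_left hdeg, ?_, fun j hj => ?_⟩
  · rw [natDegree_add_eq_left_of_degree_lt hdeg, hνd]
  have hsq : q - (ν + C c * X ^ n) ^ 2
      = (q - ν ^ 2) - X ^ n * (C (2 * c) * ν + C (c ^ 2) * X ^ n) := by
    simp only [C_mul, C_pow, C_ofNat]; ring
  have hνj : ν.coeff (j - n) = if j = m + n then 1 else 0 := by
    split_ifs with h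
    · rw [h, Nat.add_sub_cancel, ← hνd, hν.coeff_natDegree]
    · exact coeff_eq_zero_of_natDegree_lt (by omega)
  rw [hsq, coeff_sub, coeff_X_pow_mul', if_pos (by omega), coeff_add, coeff_C_mul, coeff_C_mul,
    coeff_X_pow, if_neg (by omega), hνj]
  split_ifs with h
  · subst h; rw [mul_one, mul_zero, add_zero, mul_div_cancel₀ _ h2, sub_self]
  · rw [hr j (by omega)]; ring

theorem exists_monic_degree_sub_sq_lt (h2 : (2 : K) ≠ 0) {q : K[X]} {m : ℕ} (hq : q.Monic)
    (hqd : q.natDegree = 2 * m) :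
    ∃ ν : K[X], ν.Monic ∧ ν.natDegree = m ∧ (q - ν ^ 2).degree < m := by
  suffices h : ∀ n ≤ m, ∃ ν : K[X], ν.Monic ∧ ν.natDegree = m ∧
      ∀ j, m + n ≤ j → (q - ν ^ 2).coeff j = 0 by
    obtain ⟨ν, hν, hνd, hr⟩ := h 0 m.zero_le
    exact ⟨ν, hν, hνd, (degree_lt_iff_coeff_zero _ _).mpr hr⟩
  intro n hn
  induction hn using Nat.decreasingInduction with
  | of_succ n hn ih =>
    obtain ⟨ν, hν, hνd, hr⟩ := ih
    exact exists_monic_coeff_sub_sq_eq_zero_of_succ h2 hν hνd hn hr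
  | self =>
    have hsq : (X ^ m : K[X]) ^ 2 = X ^ (m + m) := by rw [← pow_mul, mul_two]
    refine ⟨X ^ m, monic_X_pow m, natDegree_X_pow m, (degree_lt_iff_coeff_zero _ _).mp ?_⟩
    have hqdeg : q.degree = ↑(m + m) := by rw [degree_eq_natDegree hq.ne_zero, hqd, two_mul]
    rw [hsq, ← hqdeg]
    exact degree_sub_lt_left (by rw [hqdeg, degree_X_pow]) hq.ne_zero
      (by rw [hq.leadingCoeff, leadingCoeff_X_pow])

theorem Monic.eq_of_degree_sq_sub_sq_lt {R : Type*} [CommRing R] [IsDomain R] {ν₁ ν₂ : R[X]}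
    (h2 : (2 : R) ≠ 0) (h₁ : ν₁.Monic) (h₂ : ν₂.Monic) (hd : ν₁.natDegree = ν₂.natDegree)
    (h : (ν₁ ^ 2 - ν₂ ^ 2).degree < ν₁.natDegree) : ν₁ = ν₂ := by
  by_contra hne
  have hsum : (ν₁ + ν₂).coeff ν₁.natDegree = 2 := by
    rw [coeff_add, h₁.coeff_natDegree, hd, h₂.coeff_natDegree, one_add_one_eq_two]
  have hsum0 : ν₁ + ν₂ ≠ 0 := fun h0 => h2 (by rw [← hsum, h0, coeff_zero])
  have hsumd : (ν₁ + ν₂).natDegree = ν₁.natDegree :=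
    le_antisymm (natDegree_add_le_of_degree_le le_rfl hd.ge) (le_natDegree_of_ne_zero (hsum ▸ h2))
  have hsub0 : ν₁ - ν₂ ≠ 0 := sub_ne_zero.mpr hne
  rw [sq_sub_sq, Polynomial.degree_mul, degree_eq_natDegree hsum0, degree_eq_natDegree hsub0,
    hsumd] at h
  have : ν₁.natDegree + (ν₁ - ν₂).natDegree < ν₁.natDegree := by exact_mod_cast h
  omega

theorem Monic.coeff_sq_two_mul_sub_one {R : Type*} [CommSemiring R] {ν : R[X]} {m : ℕ}
    (hν : ν.Monic) (hνd : ν.natDegree = m) (hm : 0 < m) :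
    (ν ^ 2).coeff (2 * m - 1) = 2 * ν.coeff (m - 1) := by
  nontriviality R
  have hsqd : (ν ^ 2).natDegree = 2 * m := by rw [hν.natDegree_pow, hνd, mul_comm]
  have := hν.nextCoeff_pow 2
  rwa [nextCoeff_of_natDegree_pos (by omega), nextCoeff_of_natDegree_pos (by omega), hsqd, hνd,
    nsmul_eq_mul, Nat.cast_ofNat] at this

theorem degree_le_natCast_sub_one_iff {R : Type*} [Semiring R] {p : R[X]} {m : ℕ} (hm : 0 < m) :
    p.degree ≤ ↑(m - 1) ↔ p.degree < m := by
  rw [degree_le_iff_coeff_zero, degree_lt_iff_coeff_zero]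
  exact forall_congr' fun j => imp_congr_left (by norm_cast; omega)

end Polynomial

theorem stmt9 (m : ℕ) (hm : 1 ≤ m) (q : Polynomial ℂ)
    (hq : q.Monic) (hqd : q.natDegree = 2 * m) (hqc : q.coeff (2 * m - 1) = 0) :
    ∃! νb : Polynomial ℂ × Polynomial ℂ,
      νb.1.Monic ∧ νb.1.natDegree = m ∧ νb.1.coeff (m - 1) = 0 ∧
      νb.2.degree ≤ ((m - 1 : ℕ) : WithBot ℕ) ∧
      q = νb.1 ^ 2 - 4 * νb.2 := by
  obtain ⟨ν, hν, hνd, hlt⟩ := exists_monic_degree_sub_sq_lt two_ne_zero hq hqd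
  have hνc : ν.coeff (m - 1) = 0 := by
    have hr := (degree_lt_iff_coeff_zero _ _).mp hlt (2 * m - 1) (by omega)
    rw [coeff_sub, hqc, zero_sub, neg_eq_zero, hν.coeff_sq_two_mul_sub_one hνd hm] at hr
    exact (mul_eq_zero.mp hr).resolve_left two_ne_zero
  have h4ne : (4 : ℂ) ≠ 0 := by norm_num
  have h4 : (4 : ℂ[X]) * C 4⁻¹ = 1 := by
    rw [← C_ofNat, ← C_mul, mul_inv_cancel₀ h4ne, C_1]
  refine ⟨(ν, C 4⁻¹ * (ν ^ 2 - q)), ⟨hν, hνd, hνc, ?_, ?_⟩, ?_⟩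
  · rw [degree_C_mul (inv_ne_zero h4ne), degree_le_natCast_sub_one_iff hm, ← neg_sub,
      degree_neg]
    exact hlt
  · rw [← mul_assoc, h4, one_mul, sub_sub_cancel]
  rintro ⟨ν', b'⟩ ⟨hν', hν'd, -, hb', rfl⟩
  have hν'ν : ν' = ν := by
    refine hν'.eq_of_degree_sq_sub_sq_lt two_ne_zero hν (hν'd.trans hνd.symm) ?_
    have h4b' : (4 * b').degree < m := by
      rw [← C_ofNat, degree_C_mul h4ne, ← degree_le_natCast_sub_one_iff hm]
      exact hb'
    rw [hν'd, show ν' ^ 2 - ν ^ 2 = (ν' ^ 2 - 4 * b' - ν ^ 2) + 4 * b' by ring]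
    exact (degree_add_le _ _).trans_lt (max_lt hlt h4b')
  subst hν'ν
  rw [sub_sub_cancel, ← mul_assoc, mul_comm (C _), h4, one_mul]
end
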